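/- Let u, v ∈ ℝ² \ {0}. Then there exist θ ∈ (0, 2π] and γ ≠ 0 such that the matrix Φ = [[cos θ, θ^{-1} sin θ],[−θ sin θ, cos θ]] satisfies Φ u = γ v. -/

import Mathlib

/-!
Since `Φ_π = -1` and `Φ_{2π} = 1`, the signed area `wedge (Φ_θ u) v` takes opposite values at
`θ = π` and `θ = 2π`, so by the intermediate value theorem it vanishes at some `θ ∈ [π, 2π]`.
There `Φ_θ u` is a multiple of `v`, and a nonzero one because `det Φ_θ = 1`.
-/

open Real Matrix

noncomputable def ellipticRotation (θ : ℝ) : Matrix (Fin 2) (Fin 2) ℝ :=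
  !![cos θ, θ⁻¹ * sin θ; -θ * sin θ, cos θ]

lemma det_ellipticRotation {θ : ℝ} (hθ : θ ≠ 0) : (ellipticRotation θ).det = 1 := by
  rw [ellipticRotation, det_fin_two_of]
  field_simp
  linear_combination cos_sq_add_sin_sq θ

lemma ellipticRotation_mulVec_ne_zero {θ : ℝ} (hθ : θ ≠ 0) {u : Fin 2 → ℝ} (hu : u ≠ 0) :
    ellipticRotation θ *ᵥ u ≠ 0 := by
  have hunit : IsUnit (ellipticRotation θ) := by
    rw [isUnit_iff_isUnit_det, det_ellipticRotation hθ]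
    exact isUnit_one
  simpa using (mulVec_injective_of_isUnit hunit).ne hu

lemma ellipticRotation_pi : ellipticRotation π = -1 := by
  ext i j
  fin_cases i <;> fin_cases j <;> simp [ellipticRotation]

lemma ellipticRotation_two_pi : ellipticRotation (2 * π) = 1 := by
  ext i j
  fin_cases i <;> fin_cases j <;> simp [ellipticRotation]

lemma continuousOn_ellipticRotation_mulVec (u : Fin 2 → ℝ) :
    ContinuousOn (fun θ => ellipticRotation θ *ᵥ u) {θ | θ ≠ 0} := by
  refine continuousOn_pi.2 fun i => ?_
  fin_cases i <;> simp [ellipticRotation, mulVec, dotProduct, Fin.sum_univ_two] <;>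
    fun_prop (disch := exact fun _ => id)

def wedge {R : Type*} [CommRing R] (a b : Fin 2 → R) : R := a 0 * b 1 - a 1 * b 0

lemma wedge_neg_left {R : Type*} [CommRing R] (a b : Fin 2 → R) :
    wedge (-a) b = -wedge a b := by
  simp only [wedge, Pi.neg_apply]
  ring

lemma exists_eq_smul_of_wedge_eq_zero {K : Type*} [Field K] {a b : Fin 2 → K} (hb : b ≠ 0)
    (h : wedge a b = 0) : ∃ γ : K, a = γ • b := by
  have hb' : b 0 ≠ 0 ∨ b 1 ≠ 0 := by
    contrapose! hb
    ext i
    fin_cases i <;> simp [hb.1, hb.2]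
  unfold wedge at h
  rcases hb' with h0 | h1
  · refine ⟨a 0 / b 0, funext fun i => ?_⟩
    fin_cases i
    · simp [h0]
    · simp only [Fin.mk_one, Pi.smul_apply, smul_eq_mul]
      field_simp
      linear_combination -h
  · refine ⟨a 1 / b 1, funext fun i => ?_⟩
    fin_cases i
    · simp only [Fin.zero_eta, Pi.smul_apply, smul_eq_mul]
      field_simp
      linear_combination h
    · simp [h1]

lemma exists_zero_of_map_eq_neg {f : ℝ → ℝ} {a b : ℝ} (hab : a ≤ b)
    (hf : ContinuousOn f (Set.Icc a b)) (h : f a = -f b) : ∃ c ∈ Set.Icc a b, f c = 0 := by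
  have h0 : (0 : ℝ) ∈ Set.uIcc (f a) (f b) := by
    rw [h, Set.mem_uIcc]
    rcases le_total 0 (f b) with hb | hb
    · left; constructor <;> linarith
    · right; constructor <;> linarith
  rw [← Set.uIcc_of_le hab] at hf ⊢
  exact intermediate_value_uIcc hf h0

/-- Any nonzero vector of `ℝ²` can be sent onto the line of any other nonzero vector by a
time-1 elliptical rotation: there exist `θ ∈ (0,2π]` and `γ ≠ 0` with
`[[cos θ, θ⁻¹ sin θ],[−θ sin θ, cos θ]] u = γ v`. -/
theorem stmt_10 (u v : Fin 2 → ℝ) (hu : u ≠ 0) (hv : v ≠ 0) :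
    ∃ θ ∈ Set.Ioc (0 : ℝ) (2 * Real.pi), ∃ γ : ℝ, γ ≠ 0 ∧
      Matrix.mulVec (!![Real.cos θ, θ⁻¹ * Real.sin θ;
          -θ * Real.sin θ, Real.cos θ] : Matrix (Fin 2) (Fin 2) ℝ) u = γ • v := by
  set g : ℝ → ℝ := fun θ => wedge (ellipticRotation θ *ᵥ u) v
  have hIcc : Set.Icc π (2 * π) ⊆ Set.Ioi 0 := fun θ hθ => pi_pos.trans_le hθ.1
  have hg : ContinuousOn g (Set.Icc π (2 * π)) := by
    have hΦu := (continuousOn_ellipticRotation_mulVec u).mono fun θ hθ => (hIcc hθ).ne'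
    unfold g wedge
    fun_prop
  have hg_ends : g π = -g (2 * π) := by
    simp only [g, ellipticRotation_pi, ellipticRotation_two_pi, neg_mulVec, one_mulVec,
      wedge_neg_left]
  obtain ⟨θ, hθ, hgθ⟩ := exists_zero_of_map_eq_neg (by linarith [pi_pos]) hg hg_ends
  have hθ0 : 0 < θ := hIcc hθ
  obtain ⟨γ, hγ⟩ := exists_eq_smul_of_wedge_eq_zero hv hgθ
  refine ⟨θ, ⟨hθ0, hθ.2⟩, γ, ?_, hγ⟩
  rintro rfl
  exact ellipticRotation_mulVec_ne_zero hθ0.ne' hu (by simpa using hγ)
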